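/- Let π : X → X'' be an open continuous surjective homomorphism of Hausdorff topological abelian groups with kernel X'. If the Hausdorff completion cX of X is locally compact, then the induced map cX → cX'' on completions is an open surjection and the induced map cX' → cX is a closed embedding, with cX' canonically isomorphic to the kernel of cX → cX''. In particular the completed sequence cX' → cX → cX'' is a short exact sequence of topological abelian groups. -/

import Mathlib

/-!
Let `N` be the closure in `cX` of the image of `X' = ker π`. The quotient `cX ⧸ N` is locally
compact, hence complete, and `X'' ≅ X ⧸ ker π` embeds in it uniformly with dense image (for open
`U ⊆ cX` one has `U + N = U + ker π`, which identifies the neighbourhoods of `0`). So `cX ⧸ N` is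
a completion of `X''`, and under this identification the completed map `cX → cX''` is the
quotient map `cX → cX ⧸ N`: an open surjection with kernel `N`. On the other side, the completion
of the uniform embedding `X' → X` is a uniform embedding of a complete space, hence a closed
embedding, and its image is the closure `N` of the image of `X'`.
-/

open UniformSpace Topology Filter Pointwise

namespace UniformSpace.Completion

variable {α β : Type*} [UniformSpace α] [UniformSpace β] {f : α → β}

theorem isUniformInducing_map (hf : IsUniformInducing f) :
    IsUniformInducing (Completion.map f) :=
  isUniformInducing_extension ((isUniformInducing_coe β).comp hf)

theorem isClosedEmbedding_map (hf : IsUniformInducing f) :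
    IsClosedEmbedding (Completion.map f) :=
  (isUniformInducing_map hf).isUniformEmbedding.isClosedEmbedding

theorem range_map_eq_closure (hf : IsUniformInducing f) :
    Set.range (Completion.map f) = closure (Set.range ((↑) ∘ f : α → Completion β)) := by
  have hcoe : Completion.map f ∘ (↑) = ((↑) ∘ f : α → Completion β) :=
    funext (map_coe hf.uniformContinuous)
  rw [← hcoe, Set.range_comp]
  refine subset_antisymm ?_ ?_
  · rw [← Set.image_univ, ← denseRange_coe.closure_range]
    exact image_closure_subset_closure_image continuous_map
  · exact (isClosedEmbedding_map hf).isClosed_range.closure_subset_iff.mpr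
      (Set.image_subset_range _ _)

theorem exists_uniformEquiv_of_isUniformInducing_of_denseRange {Q : Type*} [UniformSpace Q]
    [CompleteSpace Q] [T0Space Q] {φ : α → Q} (hφ : IsUniformInducing φ) (hd : DenseRange φ) :
    ∃ e : Completion α ≃ᵤ Q, ∀ a : α, e a = φ a :=
  ⟨cPkg.compareEquiv ⟨Q, φ, inferInstance, inferInstance, inferInstance, hφ, hd⟩,
    cPkg.compare_coe _⟩

end UniformSpace.Completion

theorem Topology.IsQuotientMap.exists_isInducing_lift_to_quotient_closure {X Y G : Type*}
    [AddGroup X] [TopologicalSpace X] [AddGroup Y] [TopologicalSpace Y] [IsTopologicalAddGroup Y]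
    [AddCommGroup G] [TopologicalSpace G] [IsTopologicalAddGroup G]
    {π : X →+ Y} (hπ : IsQuotientMap π) {j : X →+ G} (hj : IsInducing j) :
    ∃ φ : Y →+ G ⧸ (π.ker.map j).topologicalClosure,
      IsInducing φ ∧ ∀ x, φ (π x) = j x := by
  set N := (π.ker.map j).topologicalClosure
  let q : G →+ G ⧸ N := QuotientAddGroup.mk' N
  have hker : π.ker ≤ (q.comp j).ker := fun x hx =>
    (QuotientAddGroup.eq_zero_iff _).mpr (AddSubgroup.le_topologicalClosure _ ⟨x, hx, rfl⟩)
  let φ := π.liftOfRightInverse _ (Function.rightInverse_surjInv hπ.surjective) ⟨q.comp j, hker⟩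
  have hφπ : ∀ x, φ (π x) = j x := π.liftOfRightInverse_comp_apply _ _ ⟨q.comp j, hker⟩
  refine ⟨φ, ?_, hφπ⟩
  have hφc : Continuous φ := hπ.continuous_iff.mpr <|
    (continuous_quot_mk.comp hj.continuous).congr fun x => (hφπ x).symm
  rw [IsTopologicalAddGroup.isInducing_iff_nhds_zero]
  refine le_antisymm (map_zero φ ▸ hφc.tendsto 0).le_comap fun V hV => ?_
  obtain ⟨W, hW, hWV⟩ : ∃ W ∈ 𝓝 (0 : G), j ⁻¹' W ⊆ π ⁻¹' V := by
    have := hπ.continuous.continuousAt.preimage_mem_nhds ((map_zero π).symm ▸ hV)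
    rwa [hj.nhds_eq_comap, map_zero, mem_comap] at this
  obtain ⟨U, hUW, hUo, hU0⟩ := mem_nhds_iff.mp hW
  refine mem_comap.mpr
    ⟨q '' U, (QuotientAddGroup.isOpenMap_coe U hUo).mem_nhds ⟨0, hU0, map_zero q⟩, ?_⟩
  rintro y ⟨u, hu, hqu⟩
  obtain ⟨x, rfl⟩ := hπ.surjective y
  have hx : j x ∈ U + (N : Set G) :=
    ⟨u, hu, -u + j x, QuotientAddGroup.eq.mp (hqu.trans (hφπ x)), add_neg_cancel_left _ _⟩
  rw [AddSubgroup.topologicalClosure_coe, hUo.add_closure] at hx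
  obtain ⟨w, hw, _, ⟨k, hk, rfl⟩, hwk⟩ := hx
  have hxk : j (x - k) ∈ W := by rw [map_sub, ← hwk, add_sub_cancel_right]; exact hUW hw
  simpa [(AddMonoidHom.mem_ker).mp hk] using hWV hxk

theorem UniformSpace.Completion.exists_homeomorph_quotient_closure_ker {X Y : Type*}
    [AddCommGroup X] [UniformSpace X] [IsUniformAddGroup X] [LocallyCompactSpace (Completion X)]
    [AddGroup Y] [UniformSpace Y] [IsUniformAddGroup Y] {π : X →+ Y} (hπ : IsQuotientMap π) :
    ∃ e : Completion Y ≃ₜ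
        Completion X ⧸ (π.ker.map (Completion.toCompl : X →+ Completion X)).topologicalClosure,
      e 0 = 0 ∧ Completion.map π = e.symm ∘ (↑) := by
  let N := (π.ker.map (Completion.toCompl : X →+ Completion X)).topologicalClosure
  have : IsClosed (N : Set (Completion X)) := AddSubgroup.isClosed_topologicalClosure _
  let : UniformSpace (Completion X ⧸ N) := IsTopologicalAddGroup.rightUniformSpace _
  have : IsUniformAddGroup (Completion X ⧸ N) := isUniformAddGroup_of_addCommGroup
  have : CompleteSpace (Completion X ⧸ N) :=
    IsRightUniformAddGroup.completeSpace_of_weaklyLocallyCompactSpace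
  obtain ⟨φ, hφ, hφπ⟩ := hπ.exists_isInducing_lift_to_quotient_closure
    (isDenseInducing_toCompl X).isInducing
  have hφd : DenseRange φ :=
    (QuotientAddGroup.mk_surjective.denseRange.comp denseRange_coe continuous_quot_mk).mono
      (Set.range_subset_iff.mpr fun x => ⟨π x, hφπ x⟩)
  obtain ⟨e, he⟩ := exists_uniformEquiv_of_isUniformInducing_of_denseRange
    (AddMonoidHom.isUniformInducing_of_isInducing hφ) hφd
  refine ⟨e.toHomeomorph, by rw [← coe_zero]; exact (he 0).trans (map_zero φ), ?_⟩
  refine Completion.ext continuous_map (e.symm.continuous.comp continuous_quot_mk) fun x => ?_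
  rw [map_coe (uniformContinuous_addMonoidHom_of_continuous hπ.continuous)]
  exact (e.symm_apply_apply _).symm.trans (congrArg e.symm ((he _).trans (hφπ x)))

theorem completion_short_exact_general {X' X X'' : Type*}
    [AddCommGroup X'] [UniformSpace X'] [IsUniformAddGroup X']
    [AddCommGroup X] [UniformSpace X] [IsUniformAddGroup X]
    [AddCommGroup X''] [UniformSpace X''] [IsUniformAddGroup X'']
    (i : X' →+ X) (π : X →+ X'')
    (hi : IsClosedEmbedding i) (hiker : Set.range i = (π ⁻¹' {0}))
    (hπcont : Continuous π) (hπopen : IsOpenMap π) (hπsurj : Function.Surjective π)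
    (hloc : LocallyCompactSpace (Completion X)) :
    IsOpenMap (Completion.map (π : X → X'')) ∧
      Function.Surjective (Completion.map (π : X → X'')) ∧
      IsClosedEmbedding (Completion.map (i : X' → X)) ∧
      Set.range (Completion.map (i : X' → X)) =
        (Completion.map (π : X → X'')) ⁻¹' {0} := by
  obtain ⟨e, he0, hmap⟩ :=
    Completion.exists_homeomorph_quotient_closure_ker (hπopen.isQuotientMap hπcont hπsurj)
  have hiu : IsUniformInducing i := AddMonoidHom.isUniformInducing_of_isInducing hi.isInducing
  refine ⟨?_, ?_, Completion.isClosedEmbedding_map hiu, ?_⟩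
  · rw [hmap]; exact e.symm.isOpenMap.comp QuotientAddGroup.isOpenMap_coe
  · rw [hmap]; exact e.symm.surjective.comp QuotientAddGroup.mk_surjective
  · ext z
    rw [Completion.range_map_eq_closure hiu, Set.range_comp, hiker, hmap, Set.mem_preimage,
      Function.comp_apply, Set.mem_singleton_iff, e.symm.injective.eq_iff' (e.symm_apply_apply 0),
      he0, QuotientAddGroup.eq_zero_iff, ← SetLike.mem_coe, AddSubgroup.topologicalClosure_coe,
      AddSubgroup.coe_map]
    rfl

/-- Completion of a short exact sequence of Hausdorff topological abelian groups when the
completion of the middle term is locally compact: the completed quotient map is an open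
surjection, the completed inclusion is a closed embedding, and its range is exactly the kernel
of the completed quotient map; i.e. `cX' → cX → cX''` is short exact. -/
theorem completion_short_exact {X' X X'' : Type*}
    [AddCommGroup X'] [UniformSpace X'] [IsUniformAddGroup X'] [T2Space X']
    [AddCommGroup X] [UniformSpace X] [IsUniformAddGroup X] [T2Space X]
    [AddCommGroup X''] [UniformSpace X''] [IsUniformAddGroup X''] [T2Space X'']
    (i : X' →+ X) (π : X →+ X'')
    (hi : IsClosedEmbedding i) (hiker : Set.range i = (π ⁻¹' {0}))
    (hπcont : Continuous π) (hπopen : IsOpenMap π) (hπsurj : Function.Surjective π)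
    (hloc : LocallyCompactSpace (Completion X)) :
    IsOpenMap (Completion.map (π : X → X'')) ∧
      Function.Surjective (Completion.map (π : X → X'')) ∧
      IsClosedEmbedding (Completion.map (i : X' → X)) ∧
      Set.range (Completion.map (i : X' → X)) =
        (Completion.map (π : X → X'')) ⁻¹' {0} :=
  completion_short_exact_general i π hi hiker hπcont hπopen hπsurj hloc
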